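/- Let q = q₁q₂ with q₁, q₂ distinct primes, and let m, n be integers with gcd(mn, q) = 1. Then the sum over even primitive Dirichlet characters χ mod q of χ(m)·χ̄(n)·τ(χ) equals (1/2)·∑_{±} (φ(q₁)·e(±m̄₁·q̄₂·n/q₁) + 1)·(φ(q₂)·e(±m̄₂·q̄₁·n/q₂) + 1), where m̄₁·m ≡ 1 mod q₁, m̄₂·m ≡ 1 mod q₂, q̄₂·q₂ ≡ 1 mod q₁, and q̄₁·q₁ ≡ 1 mod q₂. -/

import Mathlib

open Complex

/-- `e(x) = exp(2πix)`. -/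
noncomputable def e (x : ℝ) : ℂ := Complex.exp (2 * Real.pi * Complex.I * x)

/-- The Gauss sum `τ(χ) = ∑_{a mod N} χ(a) e(a/N)` of a Dirichlet character mod `N`. -/
noncomputable def gaussTau (N : ℕ) [NeZero N] (χ : DirichletCharacter ℂ N) : ℂ :=
  ∑ a : ZMod N, χ a * e ((a.val : ℝ) / N)

/-! Write `c = m̄n` in `ZMod q`. Each summand is then the twisted Gauss sum
`∑ₜ χ(t) e(ct/q)`, which picks up the factor `χ(-1)` when `c` is replaced by `-c`; so the sum
over even primitive characters is half the sum over all primitive characters at `c` plus the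
one at `-c`. By the Chinese remainder theorem the primitive characters mod `q₁q₂` are exactly
the products of a nontrivial character mod `q₁` and a nontrivial character mod `q₂`, and the
twisted Gauss sum of such a product factors into twisted Gauss sums mod `q₁` and mod `q₂`.
Finally, for a prime `p` and `d ≠ 0` in `ZMod p`, orthogonality gives `φ(p) e(d/p)` for the sum
of `∑ₜ χ(t) e(dt/p)` over all characters mod `p`, and the trivial character contributes `-1`.
-/

open Finset DirichletCharacter

lemma e_add (x y : ℝ) : e (x + y) = e x * e y := by
  rw [e, e, e, ← Complex.exp_add]
  push_cast
  ring_nf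

lemma e_intCast (k : ℤ) : e k = 1 := by
  rw [e, ← Complex.exp_int_mul_two_pi_mul_I k]
  push_cast
  ring_nf

lemma e_add_intCast (x : ℝ) (k : ℤ) : e (x + k) = e x := by
  rw [e_add, e_intCast, mul_one]

lemma ZMod.stdAddChar_intCast_eq_e {N : ℕ} [NeZero N] (z : ℤ) :
    ZMod.stdAddChar (z : ZMod N) = e (z / N) := by
  rw [ZMod.stdAddChar_coe, e]
  push_cast
  ring_nf

namespace ZMod

variable {q₁ q₂ : ℕ}

lemma chineseRemainder_apply (h : q₁.Coprime q₂) (t : ZMod (q₁ * q₂)) :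
    chineseRemainder h t =
      (castHom (dvd_mul_right q₁ q₂) (ZMod q₁) t, castHom (dvd_mul_left q₂ q₁) (ZMod q₂) t) :=
  Prod.ext
    (RingHom.congr_fun (RingHom.ext_zmod ((RingHom.fst _ _).comp (chineseRemainder h).toRingHom)
      (castHom (dvd_mul_right q₁ q₂) (ZMod q₁))) t)
    (RingHom.congr_fun (RingHom.ext_zmod ((RingHom.snd _ _).comp (chineseRemainder h).toRingHom)
      (castHom (dvd_mul_left q₂ q₁) (ZMod q₂))) t)

lemma isUnit_iff_isUnit_castHom (h : q₁.Coprime q₂) (t : ZMod (q₁ * q₂)) :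
    IsUnit t ↔ IsUnit (castHom (dvd_mul_right q₁ q₂) (ZMod q₁) t) ∧
      IsUnit (castHom (dvd_mul_left q₂ q₁) (ZMod q₂) t) := by
  rw [← MulEquiv.isUnit_map (chineseRemainder h), chineseRemainder_apply, Prod.isUnit_iff]

variable [NeZero q₁] [NeZero q₂]

lemma sum_castHom_mul_castHom {M : Type*} [CommSemiring M] (h : q₁.Coprime q₂)
    (f₁ : ZMod q₁ → M) (f₂ : ZMod q₂ → M) :
    ∑ t : ZMod (q₁ * q₂), f₁ (castHom (dvd_mul_right q₁ q₂) (ZMod q₁) t) *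
        f₂ (castHom (dvd_mul_left q₂ q₁) (ZMod q₂) t) =
      (∑ a, f₁ a) * ∑ b, f₂ b := by
  rw [sum_mul_sum, ← Fintype.sum_prod_type']
  exact Fintype.sum_equiv (chineseRemainder h).toEquiv _ _ fun t ↦ by
    simp [chineseRemainder_apply]

/-- Since `a₂q₂ + a₁q₁ ≡ 1 mod q₁q₂`, `x/(q₁q₂) ≡ a₂x/q₁ + a₁x/q₂ mod 1`. -/
lemma stdAddChar_eq_mul_castHom (h : q₁.Coprime q₂) {a₁ a₂ : ℤ}
    (ha₂ : ((a₂ * q₂ : ℤ) : ZMod q₁) = 1) (ha₁ : ((a₁ * q₁ : ℤ) : ZMod q₂) = 1)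
    (x : ZMod (q₁ * q₂)) :
    stdAddChar x = stdAddChar ((a₂ : ZMod q₁) * castHom (dvd_mul_right q₁ q₂) (ZMod q₁) x) *
      stdAddChar ((a₁ : ZMod q₂) * castHom (dvd_mul_left q₂ q₁) (ZMod q₂) x) := by
  have hdvd₁ : (q₁ : ℤ) ∣ a₂ * q₂ + a₁ * q₁ - 1 := by
    rw [← intCast_zmod_eq_zero_iff_dvd]
    push_cast at ha₂ ⊢
    rw [natCast_self, ha₂]
    ring
  have hdvd₂ : (q₂ : ℤ) ∣ a₂ * q₂ + a₁ * q₁ - 1 := by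
    rw [← intCast_zmod_eq_zero_iff_dvd]
    push_cast at ha₁ ⊢
    rw [natCast_self, ha₁]
    ring
  obtain ⟨k, hk⟩ := (Nat.isCoprime_iff_coprime.mpr h).mul_dvd hdvd₁ hdvd₂
  obtain ⟨X, rfl⟩ := intCast_surjective x
  have hq₁ : (q₁ : ℝ) ≠ 0 := NeZero.ne _
  have hq₂ : (q₂ : ℝ) ≠ 0 := NeZero.ne _
  have hkR : (a₂ : ℝ) * q₂ + a₁ * q₁ - 1 = q₁ * q₂ * k := by exact_mod_cast hk
  rw [map_intCast (castHom (dvd_mul_right q₁ q₂) (ZMod q₁)),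
    map_intCast (castHom (dvd_mul_left q₂ q₁) (ZMod q₂)), ← Int.cast_mul, ← Int.cast_mul,
    stdAddChar_intCast_eq_e, stdAddChar_intCast_eq_e, stdAddChar_intCast_eq_e, ← e_add]
  rw [show ((a₂ * X : ℤ) : ℝ) / q₁ + ((a₁ * X : ℤ) : ℝ) / q₂ =
      (X : ℝ) / ((q₁ * q₂ : ℕ) : ℝ) + ((k * X : ℤ) : ℝ) by
    push_cast
    field_simp
    linear_combination (X : ℝ) * hkR, e_add_intCast]

lemma castHom_eq_of_mul_eq {q d : ℕ} (hd : d ∣ q) {m n m' : ℤ} {c : ZMod q}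
    (hc : (m : ZMod q) * c = n) (hm' : ((m' * m : ℤ) : ZMod d) = 1) :
    castHom hd (ZMod d) c = ((m' * n : ℤ) : ZMod d) := by
  have h := congrArg (castHom hd (ZMod d)) hc
  rw [map_mul, map_intCast, map_intCast] at h
  push_cast at hm' ⊢
  linear_combination m' * h - castHom hd (ZMod d) c * hm'

end ZMod

lemma gaussTau_eq_gaussSum {N : ℕ} [NeZero N] (χ : DirichletCharacter ℂ N) :
    gaussTau N χ = gaussSum χ ZMod.stdAddChar := by
  refine sum_congr rfl fun a _ ↦ ?_
  rw [← ZMod.intCast_zmod_cast a, ZMod.stdAddChar_intCast_eq_e]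
  simp

lemma apply_mul_conj_apply_mul_gaussTau {N : ℕ} [NeZero N] (χ : DirichletCharacter ℂ N)
    {a b c : ZMod N} (hb : IsUnit b) (habc : a * c = b) :
    χ a * starRingEnd ℂ (χ b) * gaussTau N χ = gaussSum χ (ZMod.stdAddChar.mulShift c) := by
  have ha : IsUnit a := isUnit_of_mul_isUnit_left (habc ▸ hb)
  have hc : IsUnit c := isUnit_of_mul_isUnit_right (habc ▸ hb)
  have hχa : χ a ≠ 0 := (ha.map χ).ne_zero
  rw [gaussTau_eq_gaussSum, ← hc.unit_spec, gaussSum_mulShift_eq, starRingEnd_apply,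
    MulChar.star_apply', ← habc, map_mul, MulChar.inv_apply_eq_inv', MulChar.inv_apply_eq_inv',
    MulChar.inv_apply_eq_inv', hc.unit_spec]
  field_simp

namespace DirichletCharacter

lemma gaussSum_mulShift_neg {R : Type*} [Field R] {N : ℕ} [NeZero N]
    (χ : DirichletCharacter R N) (ψ : AddChar (ZMod N) R) (c : ZMod N) :
    gaussSum χ (ψ.mulShift (-c)) = χ (-1) * gaussSum χ (ψ.mulShift c) := by
  have h := gaussSum_mulShift_eq χ (ψ.mulShift c) (-1)
  rw [AddChar.mulShift_mulShift, Units.val_neg, Units.val_one, mul_neg_one,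
    MulChar.inv_apply_eq_inv'] at h
  rw [h]
  obtain hχ | hχ : χ (-1) = 1 ∨ χ (-1) = -1 := χ.even_or_odd <;> simp [hχ]

lemma sum_filter_even_gaussSum_mulShift {R : Type*} [Field R] [DecidableEq R] [NeZero (2 : R)]
    {N : ℕ} [NeZero N] (s : Finset (DirichletCharacter R N)) (ψ : AddChar (ZMod N) R)
    (c : ZMod N) :
    ∑ χ ∈ s with χ (-1) = 1, gaussSum χ (ψ.mulShift c) =
      2⁻¹ * ∑ χ ∈ s, (gaussSum χ (ψ.mulShift c) + gaussSum χ (ψ.mulShift (-c))) := by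
  rw [sum_filter, mul_sum]
  refine sum_congr rfl fun χ _ ↦ ?_
  rw [gaussSum_mulShift_neg]
  obtain hχ | hχ : χ (-1) = 1 ∨ χ (-1) = -1 := χ.even_or_odd
  · rw [if_pos hχ, hχ]
    field_simp
    ring
  · rw [if_neg (show ¬χ (-1) = 1 from Odd.not_even χ hχ), hχ]
    ring

lemma sum_gaussSum_mulShift_stdAddChar (N : ℕ) [NeZero N] (c : ZMod N) :
    ∑ χ : DirichletCharacter ℂ N, gaussSum χ (ZMod.stdAddChar.mulShift c) =
      N.totient * ZMod.stdAddChar c := by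
  simp only [gaussSum, AddChar.mulShift_apply]
  rw [sum_comm]
  simp_rw [← sum_mul, sum_characters_eq, ite_mul, zero_mul]
  simp

lemma sum_ne_one_gaussSum_mulShift_stdAddChar {p : ℕ} [Fact p.Prime] {c : ZMod p}
    (hc : c ≠ 0) :
    ∑ χ : DirichletCharacter ℂ p with χ ≠ 1, gaussSum χ (ZMod.stdAddChar.mulShift c) =
      p.totient * ZMod.stdAddChar c + 1 := by
  rw [filter_ne', sum_erase_eq_sub (mem_univ _), sum_gaussSum_mulShift_stdAddChar,
    gaussSum_one_left (ZMod.isPrimitive_stdAddChar p hc), sub_neg_eq_add]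

variable {R : Type*} [CommRing R] {q₁ q₂ : ℕ}

noncomputable def crtChar (χ₁ : DirichletCharacter R q₁) (χ₂ : DirichletCharacter R q₂) :
    DirichletCharacter R (q₁ * q₂) :=
  changeLevel (dvd_mul_right q₁ q₂) χ₁ * changeLevel (dvd_mul_left q₂ q₁) χ₂

lemma crtChar_apply (h : q₁.Coprime q₂) (χ₁ : DirichletCharacter R q₁)
    (χ₂ : DirichletCharacter R q₂) (t : ZMod (q₁ * q₂)) :
    crtChar χ₁ χ₂ t = χ₁ (ZMod.castHom (dvd_mul_right q₁ q₂) (ZMod q₁) t) *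
      χ₂ (ZMod.castHom (dvd_mul_left q₂ q₁) (ZMod q₂) t) := by
  rw [crtChar, MulChar.mul_apply]
  by_cases ht : IsUnit t
  · rw [← ht.unit_spec, changeLevel_eq_cast_of_dvd, changeLevel_eq_cast_of_dvd,
      ZMod.castHom_apply, ZMod.castHom_apply]
  · rw [MulChar.map_nonunit _ ht, MulChar.map_nonunit _ ht, zero_mul]
    rw [ZMod.isUnit_iff_isUnit_castHom h, not_and_or] at ht
    rcases ht with ht | ht
    · rw [MulChar.map_nonunit _ ht, zero_mul]
    · rw [MulChar.map_nonunit _ ht, mul_zero]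

lemma crtChar_apply_chineseRemainder_symm (h : q₁.Coprime q₂) (χ₁ : DirichletCharacter R q₁)
    (χ₂ : DirichletCharacter R q₂) (a : ZMod q₁) (b : ZMod q₂) :
    crtChar χ₁ χ₂ ((ZMod.chineseRemainder h).symm (a, b)) = χ₁ a * χ₂ b := by
  have hab := (ZMod.chineseRemainder h).apply_symm_apply (a, b)
  rw [ZMod.chineseRemainder_apply, Prod.mk.injEq] at hab
  rw [crtChar_apply h, hab.1, hab.2]

lemma crtChar_inj (h : q₁.Coprime q₂) {χ₁ χ₁' : DirichletCharacter R q₁}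
    {χ₂ χ₂' : DirichletCharacter R q₂} :
    crtChar χ₁ χ₂ = crtChar χ₁' χ₂' ↔ χ₁ = χ₁' ∧ χ₂ = χ₂' := by
  refine ⟨fun hχ ↦ ?_, fun ⟨h₁, h₂⟩ ↦ h₁ ▸ h₂ ▸ rfl⟩
  have key (a : ZMod q₁) (b : ZMod q₂) : χ₁ a * χ₂ b = χ₁' a * χ₂' b := by
    simpa only [crtChar_apply_chineseRemainder_symm] using
      DFunLike.congr_fun hχ ((ZMod.chineseRemainder h).symm (a, b))
  exact ⟨MulChar.ext fun a ↦ by simpa using key a 1, MulChar.ext fun b ↦ by simpa using key 1 b⟩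

lemma crtChar_one_left (χ₂ : DirichletCharacter R q₂) :
    crtChar (1 : DirichletCharacter R q₁) χ₂ = changeLevel (dvd_mul_left q₂ q₁) χ₂ := by
  rw [crtChar, changeLevel_one, one_mul]

lemma crtChar_one_right (χ₁ : DirichletCharacter R q₁) :
    crtChar χ₁ (1 : DirichletCharacter R q₂) = changeLevel (dvd_mul_right q₁ q₂) χ₁ := by
  rw [crtChar, changeLevel_one, mul_one]

lemma factorsThrough_right_crtChar_iff (h : q₁.Coprime q₂) (χ₁ : DirichletCharacter R q₁)
    (χ₂ : DirichletCharacter R q₂) :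
    (crtChar χ₁ χ₂).FactorsThrough q₂ ↔ χ₁ = 1 := by
  constructor
  · rintro ⟨_, χ, hχ⟩
    rw [← crtChar_one_left] at hχ
    exact ((crtChar_inj h).mp hχ).1
  · rintro rfl
    rw [crtChar_one_left]
    exact changeLevel_factorsThrough χ₂ _

lemma factorsThrough_left_crtChar_iff (h : q₁.Coprime q₂) (χ₁ : DirichletCharacter R q₁)
    (χ₂ : DirichletCharacter R q₂) :
    (crtChar χ₁ χ₂).FactorsThrough q₁ ↔ χ₂ = 1 := by
  constructor
  · rintro ⟨_, χ, hχ⟩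
    rw [← crtChar_one_right] at hχ
    exact ((crtChar_inj h).mp hχ).2
  · rintro rfl
    rw [crtChar_one_right]
    exact changeLevel_factorsThrough χ₁ _

lemma isPrimitive_iff_not_factorsThrough (hq₁ : q₁.Prime) (hq₂ : q₂.Prime) (hne : q₁ ≠ q₂)
    (χ : DirichletCharacter R (q₁ * q₂)) :
    χ.IsPrimitive ↔ ¬χ.FactorsThrough q₁ ∧ ¬χ.FactorsThrough q₂ := by
  have : NeZero (q₁ * q₂) := ⟨(Nat.mul_pos hq₁.pos hq₂.pos).ne'⟩
  have hlt₁ : q₁ < q₁ * q₂ := lt_mul_of_one_lt_right hq₁.pos hq₂.one_lt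
  have hlt₂ : q₂ < q₁ * q₂ := lt_mul_of_one_lt_left hq₂.pos hq₁.one_lt
  refine ⟨fun hχ ↦ ⟨fun h ↦ ?_, fun h ↦ ?_⟩, fun ⟨h₁, h₂⟩ ↦ ?_⟩
  · exact (Nat.sInf_le h).not_gt (hχ ▸ hlt₁)
  · exact (Nat.sInf_le h).not_gt (hχ ▸ hlt₂)
  have hdvd := χ.conductor_dvd_level
  have hdvd₁ : q₁ ∣ χ.conductor := by
    by_contra hn
    refine h₂ ((mem_conductorSet_iff_conductor_dvd χ (dvd_mul_left q₂ q₁)).mpr ?_)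
    exact ((hq₁.coprime_iff_not_dvd.mpr hn).symm.dvd_of_dvd_mul_left hdvd)
  have hdvd₂ : q₂ ∣ χ.conductor := by
    by_contra hn
    refine h₁ ((mem_conductorSet_iff_conductor_dvd χ (dvd_mul_right q₁ q₂)).mpr ?_)
    exact ((hq₂.coprime_iff_not_dvd.mpr hn).symm.dvd_of_dvd_mul_right hdvd)
  exact Nat.dvd_antisymm hdvd (((Nat.coprime_primes hq₁ hq₂).mpr hne).mul_dvd_of_dvd_of_dvd
    hdvd₁ hdvd₂)

lemma isPrimitive_crtChar_iff (hq₁ : q₁.Prime) (hq₂ : q₂.Prime) (hne : q₁ ≠ q₂)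
    (χ₁ : DirichletCharacter R q₁) (χ₂ : DirichletCharacter R q₂) :
    (crtChar χ₁ χ₂).IsPrimitive ↔ χ₁ ≠ 1 ∧ χ₂ ≠ 1 := by
  have h := (Nat.coprime_primes hq₁ hq₂).mpr hne
  rw [isPrimitive_iff_not_factorsThrough hq₁ hq₂ hne, factorsThrough_left_crtChar_iff h,
    factorsThrough_right_crtChar_iff h, and_comm]

variable [NeZero q₁] [NeZero q₂]

lemma crtChar_bijective (h : q₁.Coprime q₂) :
    Function.Bijective fun χ : DirichletCharacter ℂ q₁ × DirichletCharacter ℂ q₂ ↦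
      crtChar χ.1 χ.2 := by
  refine (Fintype.bijective_iff_injective_and_card _).mpr ⟨fun χ χ' hχ ↦ ?_, ?_⟩
  · exact Prod.ext_iff.mpr ((crtChar_inj h).mp hχ)
  · simp only [← Nat.card_eq_fintype_card, Nat.card_prod,
      card_eq_totient_of_hasEnoughRootsOfUnity, Nat.totient_mul h]

open scoped Classical in
lemma sum_isPrimitive_eq_sum_crtChar {M : Type*} [AddCommMonoid M] (hq₁ : q₁.Prime)
    (hq₂ : q₂.Prime) (hne : q₁ ≠ q₂) (f : DirichletCharacter ℂ (q₁ * q₂) → M) :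
    ∑ χ with χ.IsPrimitive, f χ =
      ∑ χ₁ : DirichletCharacter ℂ q₁ with χ₁ ≠ 1, ∑ χ₂ : DirichletCharacter ℂ q₂ with χ₂ ≠ 1,
        f (crtChar χ₁ χ₂) := by
  have h := (Nat.coprime_primes hq₁ hq₂).mpr hne
  rw [← sum_product']
  symm
  refine sum_nbij (fun χ ↦ crtChar χ.1 χ.2) (fun χ hχ ↦ ?_)
    ((crtChar_bijective h).injective.injOn) (fun χ hχ ↦ ?_) fun _ _ ↦ rfl
  · simp only [mem_product, mem_filter, mem_univ, true_and] at hχ ⊢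
    exact (isPrimitive_crtChar_iff hq₁ hq₂ hne _ _).mpr hχ
  · obtain ⟨χ', rfl⟩ := (crtChar_bijective h).surjective χ
    refine ⟨χ', ?_, rfl⟩
    simp only [coe_filter, Set.mem_ofPred_eq, mem_univ, true_and, coe_product,
      Set.mem_prod] at hχ ⊢
    exact (isPrimitive_crtChar_iff hq₁ hq₂ hne _ _).mp hχ

lemma gaussSum_crtChar_mulShift (h : q₁.Coprime q₂) {a₁ a₂ : ℤ}
    (ha₂ : ((a₂ * q₂ : ℤ) : ZMod q₁) = 1) (ha₁ : ((a₁ * q₁ : ℤ) : ZMod q₂) = 1)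
    (χ₁ : DirichletCharacter ℂ q₁) (χ₂ : DirichletCharacter ℂ q₂) (c : ZMod (q₁ * q₂)) :
    gaussSum (crtChar χ₁ χ₂) (ZMod.stdAddChar.mulShift c) =
      gaussSum χ₁ (ZMod.stdAddChar.mulShift
          ((a₂ : ZMod q₁) * ZMod.castHom (dvd_mul_right q₁ q₂) (ZMod q₁) c)) *
        gaussSum χ₂ (ZMod.stdAddChar.mulShift
          ((a₁ : ZMod q₂) * ZMod.castHom (dvd_mul_left q₂ q₁) (ZMod q₂) c)) := by
  simp only [gaussSum, AddChar.mulShift_apply]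
  rw [← ZMod.sum_castHom_mul_castHom h]
  refine sum_congr rfl fun t _ ↦ ?_
  rw [crtChar_apply h, ZMod.stdAddChar_eq_mul_castHom h ha₂ ha₁,
    map_mul (ZMod.castHom (dvd_mul_right q₁ q₂) (ZMod q₁)),
    map_mul (ZMod.castHom (dvd_mul_left q₂ q₁) (ZMod q₂))]
  ring_nf

open scoped Classical in
lemma sum_isPrimitive_gaussSum_mulShift (hq₁ : q₁.Prime) (hq₂ : q₂.Prime) (hne : q₁ ≠ q₂)
    {a₁ a₂ : ℤ} (ha₂ : ((a₂ * q₂ : ℤ) : ZMod q₁) = 1) (ha₁ : ((a₁ * q₁ : ℤ) : ZMod q₂) = 1)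
    {c : ZMod (q₁ * q₂)} (hc : IsUnit c) :
    ∑ χ : DirichletCharacter ℂ (q₁ * q₂) with χ.IsPrimitive,
        gaussSum χ (ZMod.stdAddChar.mulShift c) =
      (q₁.totient * ZMod.stdAddChar ((a₂ : ZMod q₁) *
          ZMod.castHom (dvd_mul_right q₁ q₂) (ZMod q₁) c) + 1) *
        (q₂.totient * ZMod.stdAddChar ((a₁ : ZMod q₂) *
          ZMod.castHom (dvd_mul_left q₂ q₁) (ZMod q₂) c) + 1) := by
  have : Fact q₁.Prime := ⟨hq₁⟩
  have : Fact q₂.Prime := ⟨hq₂⟩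
  have hc₁ : (a₂ : ZMod q₁) * ZMod.castHom (dvd_mul_right q₁ q₂) (ZMod q₁) c ≠ 0 := by
    push_cast at ha₂
    exact ((IsUnit.of_mul_eq_one _ ha₂).mul (hc.map _)).ne_zero
  have hc₂ : (a₁ : ZMod q₂) * ZMod.castHom (dvd_mul_left q₂ q₁) (ZMod q₂) c ≠ 0 := by
    push_cast at ha₁
    exact ((IsUnit.of_mul_eq_one _ ha₁).mul (hc.map _)).ne_zero
  rw [sum_isPrimitive_eq_sum_crtChar hq₁ hq₂ hne]
  simp_rw [gaussSum_crtChar_mulShift ((Nat.coprime_primes hq₁ hq₂).mpr hne) ha₂ ha₁]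
  rw [← sum_mul_sum, sum_ne_one_gaussSum_mulShift_stdAddChar hc₁,
    sum_ne_one_gaussSum_mulShift_stdAddChar hc₂]

end DirichletCharacter

/-- For `q = q₁q₂` with `q₁ ≠ q₂` primes and `gcd(mn,q)=1`, the sum over even
primitive `χ` mod `q` of `χ(m)χ̄(n)τ(χ)` equals
`(1/2)·∑_± (φ(q₁)·e(±m̄₁q̄₂n/q₁) + 1)·(φ(q₂)·e(±m̄₂q̄₁n/q₂) + 1)`, where `m̄₁m ≡ 1 (q₁)`,
`m̄₂m ≡ 1 (q₂)`, `q̄₂q₂ ≡ 1 (q₁)`, `q̄₁q₁ ≡ 1 (q₂)`. -/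
theorem stmt7 (q₁ q₂ : ℕ) [NeZero q₁] [NeZero q₂] (hq₁ : q₁.Prime) (hq₂ : q₂.Prime)
    (hne : q₁ ≠ q₂) (m n : ℤ) (hmn : IsCoprime (m * n) ((q₁ * q₂ : ℕ) : ℤ))
    (mb₁ mb₂ qb₁ qb₂ : ℤ)
    (hmb₁ : ((mb₁ * m : ℤ) : ZMod q₁) = 1) (hmb₂ : ((mb₂ * m : ℤ) : ZMod q₂) = 1)
    (hqb₂ : ((qb₂ * q₂ : ℤ) : ZMod q₁) = 1) (hqb₁ : ((qb₁ * q₁ : ℤ) : ZMod q₂) = 1) :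
    (∑' χ : {χ : DirichletCharacter ℂ (q₁ * q₂) // χ.IsPrimitive ∧ χ (-1) = 1},
        (χ : DirichletCharacter ℂ (q₁ * q₂)) (m : ZMod (q₁ * q₂)) *
          (starRingEnd ℂ) ((χ : DirichletCharacter ℂ (q₁ * q₂)) (n : ZMod (q₁ * q₂))) *
          gaussTau (q₁ * q₂) (χ : DirichletCharacter ℂ (q₁ * q₂))) =
      (1 / 2 : ℂ) *
        (((Nat.totient q₁ : ℂ) * e (((mb₁ * qb₂ * n : ℤ) : ℝ) / q₁) + 1) *
            ((Nat.totient q₂ : ℂ) * e (((mb₂ * qb₁ * n : ℤ) : ℝ) / q₂) + 1) +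
          ((Nat.totient q₁ : ℂ) * e ((-(mb₁ * qb₂ * n : ℤ) : ℝ) / q₁) + 1) *
            ((Nat.totient q₂ : ℂ) * e ((-(mb₂ * qb₁ * n : ℤ) : ℝ) / q₂) + 1)) := by
  classical
  obtain ⟨hm, hn⟩ : IsUnit (m : ZMod (q₁ * q₂)) ∧ IsUnit (n : ZMod (q₁ * q₂)) := by
    rw [← IsUnit.mul_iff, ← Int.cast_mul, ZMod.coe_int_isUnit_iff_isCoprime]
    exact hmn.symm
  obtain ⟨c, hc⟩ : ∃ c, (m : ZMod (q₁ * q₂)) * c = n :=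
    ⟨hm.unit⁻¹ * n, by rw [← mul_assoc, hm.mul_val_inv, one_mul]⟩
  have hcu : IsUnit c := isUnit_of_mul_isUnit_right (hc ▸ hn)
  have hc₁ : (qb₂ : ZMod q₁) * ZMod.castHom (dvd_mul_right q₁ q₂) (ZMod q₁) c =
      ((mb₁ * qb₂ * n : ℤ) : ZMod q₁) := by
    rw [ZMod.castHom_eq_of_mul_eq _ hc hmb₁]
    push_cast
    ring
  have hc₂ : (qb₁ : ZMod q₂) * ZMod.castHom (dvd_mul_left q₂ q₁) (ZMod q₂) c =
      ((mb₂ * qb₁ * n : ℤ) : ZMod q₂) := by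
    rw [ZMod.castHom_eq_of_mul_eq _ hc hmb₂]
    push_cast
    ring
  rw [tsum_fintype, ← Finset.sum_subtype _ (fun _ ↦ mem_filter_univ _)
      (f := fun χ : DirichletCharacter ℂ (q₁ * q₂) ↦ χ m * starRingEnd ℂ (χ n) * gaussTau _ χ),
    ← filter_filter,
    sum_congr rfl fun χ _ ↦ apply_mul_conj_apply_mul_gaussTau χ hn hc,
    sum_filter_even_gaussSum_mulShift, sum_add_distrib,
    sum_isPrimitive_gaussSum_mulShift hq₁ hq₂ hne hqb₂ hqb₁ hcu,
    sum_isPrimitive_gaussSum_mulShift hq₁ hq₂ hne hqb₂ hqb₁ hcu.neg, map_neg, map_neg,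
    mul_neg, mul_neg, hc₁, hc₂, ← Int.cast_neg, ← Int.cast_neg]
  simp only [ZMod.stdAddChar_intCast_eq_e]
  push_cast
  ring
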